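/- arXiv:2112.08053 — 2 statements merged into one kernel-verified Lean document; each statement's English description precedes it below -/
import Mathlib

section
/- If the discrete 1-forms F and G are coboundaries, F = df and G = dg for functions f, g on vertices, then for each edge uv with G(uv) ≠ 0 and each link vertex w, the average h(w) = (H(uw) + H(vw))/2 equals h_{λ*}(w) − h_{λ*}(u), where h_{λ*} = f + λ*g and λ* = (f(u)−f(v))/(g(v)−g(u)). Hence the vector-field edge test (H(ua)+H(va))(H(ub)+H(vb)) > 0 coincides with the Edelsbrunner–Harer function edge test: h_{λ*}(a) − h_{λ*}(u) and h_{λ*}(b) − h_{λ*}(u) have the same sign. -/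
theorem stmt10 {V : Type*} (f g : V → ℝ) (u v a b : V) (hg : g u ≠ g v)
    (F G : V → V → ℝ)
    (hF : ∀ x y, F x y = f y - f x) (hG : ∀ x y, G x y = g y - g x)
    (lam : ℝ) (hlam : lam = (f u - f v) / (g v - g u))
    (H : V → V → ℝ) (hH : ∀ x y, H x y = F x y + lam * G x y)
    (h : V → ℝ) (hh : ∀ x, h x = f x + lam * g x) :
    (∀ w, (H u w + H v w) / 2 = h w - h u) ∧
    ((H u a + H v a) * (H u b + H v b) > 0 ↔ (h a - h u) * (h b - h u) > 0) := by
  have hne : g v - g u ≠ 0 := sub_ne_zero.mpr (Ne.symm hg)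
  have huv : h u = h v := by
    simp only [hh, hlam]
    field_simp
    ring
  have key : ∀ w, (H u w + H v w) / 2 = h w - h u := by
    intro w
    have : H u w + H v w = 2 * h w - h u - h v := by
      simp only [hH, hF, hG, hh]; ring
    rw [this, ← huv]; ring
  refine ⟨key, ?_⟩
  have ha : H u a + H v a = 2 * (h a - h u) := by
    have := key a; linarith
  have hb : H u b + H v b = 2 * (h b - h u) := by
    have := key b; linarith
  rw [ha, hb]
  constructor <;> intro hp <;> nlinarith [hp]
end

section
/- Let u be a vertex whose link in a 2-dimensional triangulation is a cycle a₀, …, a_{k−1} (indices mod k), and let f, g : V → ℝ with all values g(a_i) ≠ g(u). For each neighbor a_i define λ_i = (f(u)−f(a_i))/(g(a_i)−g(u)), and for λ ∈ ℝ let s_i(λ) = sign(h_λ(a_i) − h_λ(u)) where h_λ = f + λg. Assume all λ_i are distinct and that for λ not equal to any λ_i no s_i(λ) is zero. Then the number of neighbors a_i of u for which the discrete Jacobi multiplicity of the edge u a_i is odd is even. -/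
open Finset

lemma parity_lemma {ι : Type*} [DecidableEq ι] (V : ι → ℝ) (s : Finset ι)
    (h : ∀ i ∈ s, V i ≠ 0) :
    (Even ((s.filter (fun i => V i < 0)).card) ↔ 0 < ∏ i ∈ s, V i) := by
  induction s using Finset.induction_on with
  | empty => simp
  | @insert a s ha ih =>
    have hVa := h a (mem_insert_self a s)
    have hs0 : ∏ i ∈ s, V i ≠ 0 :=
      prod_ne_zero_iff.2 (fun i hi => h i (mem_insert_of_mem hi))
    have ih' := ih (fun i hi => h i (mem_insert_of_mem hi))
    rw [filter_insert, prod_insert ha]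
    by_cases hn : V a < 0
    · simp only [if_pos hn]
      have hna : a ∉ filter (fun i => V i < 0) s := fun hmem => ha (mem_filter.1 hmem).1
      rw [card_insert_of_notMem hna, Nat.even_add_one, not_iff_comm, ih', not_lt]
      constructor
      · intro h1
        rcases hs0.lt_or_gt with h2 | h2
        · nlinarith
        · exact h2
      · intro h1; nlinarith
    · simp only [if_neg hn]
      have hpa : 0 < V a := lt_of_le_of_ne (not_lt.1 hn) (Ne.symm hVa)
      rw [ih']
      constructor
      · intro hp; exact mul_pos hpa hp
      · intro hp; nlinarith

theorem stmt12 (k : ℕ) [NeZero k] (hk : 3 ≤ k)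
    (f g : ZMod k → ℝ) (fu gu : ℝ)
    (hg : ∀ i, g i ≠ gu)
    (lam : ZMod k → ℝ) (hlam : ∀ i, lam i = (fu - f i) / (g i - gu))
    (hdist : Function.Injective lam) :
    Even ({i : ZMod k |
      ((f (i - 1) + lam i * g (i - 1)) - (fu + lam i * gu)) *
        ((f (i + 1) + lam i * g (i + 1)) - (fu + lam i * gu)) > 0}.ncard) := by
  haveI : Fact (1 < k) := ⟨by omega⟩
  have hone : (1 : ZMod k) ≠ 0 := one_ne_zero
  classical
  set F : ZMod k → ℝ := fun i =>
      ((f (i - 1) + lam i * g (i - 1)) - (fu + lam i * gu)) *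
        ((f (i + 1) + lam i * g (i + 1)) - (fu + lam i * gu)) with hFdef
  have key : ∀ j i : ZMod k,
      (f j + lam i * g j) - (fu + lam i * gu) = (g j - gu) * (lam i - lam j) := by
    intro j i
    have h1 : g j - gu ≠ 0 := sub_ne_zero.2 (hg j)
    rw [hlam j]
    field_simp
    ring
  have hF : ∀ i, F i =
      ((g (i-1) - gu) * (lam i - lam (i-1))) * ((g (i+1) - gu) * (lam i - lam (i+1))) := by
    intro i
    rw [hFdef]
    simp only
    rw [key, key]
  have hne : ∀ i j : ZMod k, i ≠ j → (g j - gu) * (lam i - lam j) ≠ 0 := fun i j hij =>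
    mul_ne_zero (sub_ne_zero.2 (hg j)) (sub_ne_zero.2 (fun h => hij (hdist h)))
  have him : ∀ i : ZMod k, i ≠ i - 1 := fun i h => hone (sub_eq_self.mp h.symm)
  have hip : ∀ i : ZMod k, i ≠ i + 1 := fun i h => hone (left_eq_add.mp h)
  have hFne : ∀ i, F i ≠ 0 := fun i => by
    rw [hF i]
    exact mul_ne_zero (hne i (i-1) (him i)) (hne i (i+1) (hip i))
  have hdne : ∀ i : ZMod k, lam i - lam (i+1) ≠ 0 :=
    fun i => sub_ne_zero.2 (fun h => hip i (hdist h))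
  -- product computation
  have hre1 : ∏ i : ZMod k, ((g (i-1) - gu) * (lam i - lam (i-1)))
      = ∏ i : ZMod k, ((g i - gu) * (lam (i+1) - lam i)) := by
    refine Fintype.prod_equiv (Equiv.addRight (1 : ZMod k)).symm _ _ (fun i => ?_)
    simp [sub_add_cancel, sub_eq_add_neg]
  have hre2 : ∏ i : ZMod k, (g (i+1) - gu) = ∏ i : ZMod k, (g i - gu) := by
    refine Fintype.prod_equiv (Equiv.addRight (1 : ZMod k)) _ _ (fun i => ?_)
    simp
  have hprod : ∏ i : ZMod k, F i
      = (-1)^k * ((∏ i : ZMod k, (g i - gu))^2 * ∏ i : ZMod k, (lam i - lam (i+1))^2) := by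
    calc ∏ i : ZMod k, F i
        = ∏ i : ZMod k, (((g (i-1) - gu) * (lam i - lam (i-1))) *
            ((g (i+1) - gu) * (lam i - lam (i+1)))) :=
          Finset.prod_congr rfl (fun i _ => hF i)
      _ = (∏ i : ZMod k, ((g (i-1) - gu) * (lam i - lam (i-1)))) *
            ∏ i : ZMod k, ((g (i+1) - gu) * (lam i - lam (i+1))) := Finset.prod_mul_distrib
      _ = (∏ i : ZMod k, ((g i - gu) * (lam (i+1) - lam i))) *
            ∏ i : ZMod k, ((g (i+1) - gu) * (lam i - lam (i+1))) := by rw [hre1]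
      _ = ∏ i : ZMod k, (((g i - gu) * (lam (i+1) - lam i)) *
            ((g (i+1) - gu) * (lam i - lam (i+1)))) := Finset.prod_mul_distrib.symm
      _ = ∏ i : ZMod k, ((-1) * ((g i - gu) * ((g (i+1) - gu) * (lam i - lam (i+1))^2))) :=
          Finset.prod_congr rfl (fun i _ => by ring)
      _ = (∏ _i : ZMod k, (-1 : ℝ)) *
            ((∏ i : ZMod k, (g i - gu)) * ((∏ i : ZMod k, (g (i+1) - gu)) *
              ∏ i : ZMod k, (lam i - lam (i+1))^2)) := by
          rw [← Finset.prod_mul_distrib, ← Finset.prod_mul_distrib, ← Finset.prod_mul_distrib]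
      _ = (-1)^k * ((∏ i : ZMod k, (g i - gu))^2 * ∏ i : ZMod k, (lam i - lam (i+1))^2) := by
          rw [Finset.prod_const, hre2, Finset.card_univ, ZMod.card]
          ring
  have hgprod : ∏ i : ZMod k, (g i - gu) ≠ 0 :=
    Finset.prod_ne_zero_iff.2 (fun i _ => sub_ne_zero.2 (hg i))
  have hB : (0:ℝ) < (∏ i : ZMod k, (g i - gu))^2 * ∏ i : ZMod k, (lam i - lam (i+1))^2 :=
    mul_pos (pow_two_pos_of_ne_zero hgprod)
      (Finset.prod_pos (fun i _ => pow_two_pos_of_ne_zero (hdne i)))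
  have hiff : (0 < ∏ i : ZMod k, F i) ↔ Even k := by
    rw [hprod]
    constructor
    · intro h
      by_contra hodd
      have : (-1:ℝ)^k = -1 := (Nat.not_even_iff_odd.mp hodd).neg_one_pow
      rw [this] at h
      nlinarith
    · intro h
      rw [h.neg_one_pow]
      nlinarith
  -- counting
  have hsetF : {i : ZMod k | F i > 0} = ↑(Finset.univ.filter (fun i => 0 < F i)) := by
    ext i; simp [gt_iff_lt]
  rw [hsetF, Set.ncard_coe_finset]
  have hneg : Finset.univ.filter (fun i : ZMod k => ¬ 0 < F i)
      = Finset.univ.filter (fun i => F i < 0) := by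
    apply Finset.filter_congr
    intro i _
    simp only [not_lt]
    exact ⟨fun h => h.lt_of_ne (hFne i), fun h => h.le⟩
  have hsplit := Finset.card_filter_add_card_filter_not
    (s := (Finset.univ : Finset (ZMod k))) (p := fun i => 0 < F i)
  rw [hneg, Finset.card_univ, ZMod.card] at hsplit
  have hpar : Even ((Finset.univ.filter (fun i : ZMod k => F i < 0)).card) ↔ Even k := by
    rw [parity_lemma F Finset.univ (fun i _ => hFne i)]
    exact hiff
  obtain ⟨A, hA⟩ : ∃ A, (Finset.univ.filter (fun i : ZMod k => 0 < F i)).card = A := ⟨_, rfl⟩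
  obtain ⟨B, hB⟩ : ∃ B, (Finset.univ.filter (fun i : ZMod k => F i < 0)).card = B := ⟨_, rfl⟩
  rw [hA, hB] at hsplit
  rw [hB] at hpar
  rw [hA]
  simp only [Nat.even_iff] at hpar ⊢
  omega
end
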